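/- Let n, M, N be natural numbers and σ, δ real numbers with 0 < σ < δ ≤ 1, σ/2^(n+5) ≤ 3^(-N) ≤ σ/2^n ≤ 3^(-M) ≤ δ/2^n, and let y be a real number. Let C_N denote the set of endpoints of the intervals in the N-th level of the construction of the middle-third Cantor set (i.e., rationals a/3^N and 1 - a/3^N where a ∈ [0, 3^N] is an integer whose ternary expansion uses only digits 0 and 2), and let A_n^y(σ) = {x ∈ ℝ : ‖2^n x − y‖ < σ}, where ‖·‖ is distance to the nearest integer. Then |C_N ∩ A_n^y(σ)| ≤ c·|C_M ∩ A_n^y(2δ)| for some absolute constant c > 0. -/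

import Mathlib

/-- distance from `x` to the nearest integer -/
noncomputable def nint (x : ℝ) : ℝ := |x - round x|

/-- `A_n^y(σ) = {x : ‖2^n x - y‖ < σ}` -/
def approxSet (n : ℕ) (y σ : ℝ) : Set ℝ := {x : ℝ | nint (2 ^ n * x - y) < σ}

/-- ternary digits of `a` are all `0` or `2` -/
def goodDigits (a : ℕ) : Prop := ∀ d ∈ Nat.digits 3 a, d ≠ 1

/-- left endpoints of the level-`N` intervals of the Cantor set -/
def leftEndpoints (N : ℕ) : Set ℝ :=
  {x : ℝ | ∃ a : ℕ, a < 3 ^ N ∧ goodDigits a ∧ x = (a : ℝ) / 3 ^ N}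

/-- all endpoints of the level-`N` intervals of the Cantor set -/
def endpoints (N : ℕ) : Set ℝ :=
  leftEndpoints N ∪ (fun x : ℝ => 1 - x) '' leftEndpoints N

/-!
Round each `x ∈ C_N ∩ A_n^y(σ)` up to the grid `3^{-M} ℤ`. As `C_N` refines `C_M`, the rounded
point lies in `C_M`, and `2^n x` moves by at most `2^n 3^{-M} ≤ δ`, so it lies in
`A_n^y(σ + δ) ⊆ A_n^y(2δ)`. The fibres of this rounding are uniformly small: within a fibre the
integer `m` nearest to `2^n x - y` takes at most five values, and once `m` is fixed the integer
`3^N x` lies within `3^N σ / 2^n ≤ 32` of `3^N (y + m) / 2^n`. The map `endpointCode` records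
exactly these data, injectively, in `(C_M ∩ A_n^y(2δ)) × [-2, 2] × [-33, 33]`.
-/

lemma goodDigits_three_mul_add {q r : ℕ} (hr : r < 3) :
    goodDigits (3 * q + r) ↔ r ≠ 1 ∧ goodDigits q := by
  rcases Nat.eq_zero_or_pos (3 * q + r) with h0 | h0
  · obtain ⟨rfl, rfl⟩ : q = 0 ∧ r = 0 := by omega
    simp [goodDigits]
  · rw [goodDigits, add_comm, Nat.digits_add 3 (by norm_num) r q hr (by omega)]
    simp [goodDigits]

lemma goodDigits_iff (a : ℕ) : goodDigits a ↔ a % 3 ≠ 1 ∧ goodDigits (a / 3) := by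
  conv_lhs => rw [← Nat.div_add_mod a 3]
  exact goodDigits_three_mul_add (Nat.mod_lt a (by norm_num))

lemma goodDigits.div_pow {a : ℕ} (h : goodDigits a) (k : ℕ) : goodDigits (a / 3 ^ k) := by
  induction k with
  | zero => simpa using h
  | succ k ih =>
    rw [pow_succ, ← Nat.div_div_eq_div_mul]
    exact ((goodDigits_iff _).mp ih).2

-- The ternary digits of `3 ^ m - 1 - a` are `2 - d` for the digits `d` of `a`.
lemma goodDigits.pow_sub_one_sub {m a : ℕ} (h : goodDigits a) (ha : a < 3 ^ m) :
    goodDigits (3 ^ m - 1 - a) := by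
  induction m generalizing a with
  | zero =>
    obtain rfl : a = 0 := by simpa using ha
    simpa using h
  | succ m ih =>
    obtain ⟨hr, hq⟩ := (goodDigits_iff a).mp h
    have hdecomp : 3 ^ (m + 1) - 1 - a = 3 * (3 ^ m - 1 - a / 3) + (2 - a % 3) := by
      rw [pow_succ] at ha ⊢; omega
    rw [hdecomp, goodDigits_three_mul_add (by omega)]
    exact ⟨by omega, ih hq (by rw [pow_succ] at ha; omega)⟩

lemma mem_endpoints_iff {N : ℕ} {x : ℝ} :
    x ∈ endpoints N ↔
      ∃ a < 3 ^ N, goodDigits a ∧ (x = a / 3 ^ N ∨ x = (a + 1) / 3 ^ N) := by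
  have hpos : (0 : ℝ) < 3 ^ N := by positivity
  have hreflect : ∀ a < 3 ^ N, (1 : ℝ) - a / 3 ^ N = ((3 ^ N - 1 - a : ℕ) + 1) / 3 ^ N := by
    intro a ha
    rw [Nat.cast_sub (by omega), Nat.cast_sub (Nat.one_le_pow _ _ (by norm_num))]
    field_simp
    push_cast
    ring
  constructor
  · rintro (⟨a, ha, hg, rfl⟩ | ⟨_, ⟨a, ha, hg, rfl⟩, rfl⟩)
    · exact ⟨a, ha, hg, Or.inl rfl⟩
    · exact ⟨3 ^ N - 1 - a, by omega, hg.pow_sub_one_sub ha, Or.inr (hreflect a ha)⟩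
  · rintro ⟨a, ha, hg, rfl | rfl⟩
    · exact Or.inl ⟨a, ha, hg, rfl⟩
    · have hb : 3 ^ N - 1 - a < 3 ^ N := by omega
      refine Or.inr ⟨_, ⟨3 ^ N - 1 - a, hb, hg.pow_sub_one_sub ha, rfl⟩, ?_⟩
      simp only [hreflect _ hb, Nat.sub_sub_self (show a ≤ 3 ^ N - 1 by omega)]

lemma finite_endpoints (N : ℕ) : (endpoints N).Finite := by
  have hleft : (leftEndpoints N).Finite :=
    ((Set.finite_Iio (3 ^ N)).image fun a : ℕ => (a : ℝ) / 3 ^ N).subset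
      fun _ ⟨a, ha, _, hx⟩ => ⟨a, ha, hx.symm⟩
  exact hleft.union (hleft.image _)

lemma exists_intCast_eq_of_mem_endpoints {N : ℕ} {x : ℝ} (hx : x ∈ endpoints N) :
    ∃ j : ℤ, (3 : ℝ) ^ N * x = j := by
  obtain ⟨a, -, -, rfl | rfl⟩ := mem_endpoints_iff.mp hx
  · exact ⟨a, by field_simp; norm_cast⟩
  · exact ⟨a + 1, by field_simp; norm_cast⟩

-- `b` is the address of the level-`N` interval of `x`, truncated to `M` ternary digits.
lemma exists_goodDigits_le_pow_mul_le {M N : ℕ} (hMN : M ≤ N) {x : ℝ} (hx : x ∈ endpoints N) :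
    ∃ b < 3 ^ M, goodDigits b ∧ (b : ℝ) ≤ 3 ^ M * x ∧ 3 ^ M * x ≤ b + 1 := by
  obtain ⟨a, ha, hg, hxa⟩ := mem_endpoints_iff.mp hx
  set k := N - M
  have hN : 3 ^ N = 3 ^ M * 3 ^ k := by rw [← pow_add]; congr 1; omega
  have hk : 0 < 3 ^ k := by positivity
  have hlo : a / 3 ^ k * 3 ^ k ≤ a := Nat.div_mul_le_self a _
  have hhi : a + 1 ≤ (a / 3 ^ k + 1) * 3 ^ k := by
    have := Nat.lt_mul_div_succ a hk; rw [mul_comm] at this; omega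
  have hloR : ((a / 3 ^ k : ℕ) : ℝ) * 3 ^ k ≤ a := by exact_mod_cast hlo
  have hhiR : (a : ℝ) + 1 ≤ ((a / 3 ^ k : ℕ) + 1) * 3 ^ k := by exact_mod_cast hhi
  have hxN : (a : ℝ) ≤ 3 ^ N * x ∧ 3 ^ N * x ≤ a + 1 := by
    rcases hxa with rfl | rfl <;> field_simp <;> norm_num
  have hscale : (3 : ℝ) ^ N * x = 3 ^ M * x * 3 ^ k := by
    rw [show (3 : ℝ) ^ N = 3 ^ M * 3 ^ k by exact_mod_cast hN]; ring
  have hk' : (0 : ℝ) < 3 ^ k := by positivity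
  refine ⟨a / 3 ^ k, (Nat.div_lt_iff_lt_mul hk).mpr (hN ▸ ha), hg.div_pow k, ?_, ?_⟩
  · exact le_of_mul_le_mul_right (by linarith) hk'
  · exact le_of_mul_le_mul_right (by linarith) hk'

noncomputable def gridCeil (M : ℕ) (x : ℝ) : ℝ := ⌈(3 : ℝ) ^ M * x⌉ / 3 ^ M

lemma le_gridCeil (M : ℕ) (x : ℝ) : x ≤ gridCeil M x := by
  rw [gridCeil, le_div_iff₀ (by positivity), mul_comm]
  exact Int.le_ceil _

lemma gridCeil_le (M : ℕ) (x : ℝ) : gridCeil M x ≤ x + ((3 : ℝ) ^ M)⁻¹ := by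
  have hpos : (0 : ℝ) < 3 ^ M := by positivity
  rw [gridCeil, div_le_iff₀ hpos, add_mul, inv_mul_cancel₀ hpos.ne', mul_comm x]
  exact (Int.ceil_lt_add_one _).le

lemma gridCeil_mem_endpoints {M N : ℕ} (hMN : M ≤ N) {x : ℝ} (hx : x ∈ endpoints N) :
    gridCeil M x ∈ endpoints M := by
  obtain ⟨b, hb, hg, hlo, hhi⟩ := exists_goodDigits_le_pow_mul_le hMN hx
  have hceil_lo : (b : ℤ) ≤ ⌈(3 : ℝ) ^ M * x⌉ := Int.le_ceil_iff.mpr (by push_cast; linarith)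
  have hceil_hi : ⌈(3 : ℝ) ^ M * x⌉ ≤ b + 1 := Int.ceil_le.mpr (by push_cast; linarith)
  refine mem_endpoints_iff.mpr ⟨b, hb, hg, ?_⟩
  obtain h | h : ⌈(3 : ℝ) ^ M * x⌉ = b ∨ ⌈(3 : ℝ) ^ M * x⌉ = b + 1 := by omega
  · left; rw [gridCeil, h]; push_cast; rfl
  · right; rw [gridCeil, h]; push_cast; rfl

lemma nint_add_le (x t : ℝ) : nint (x + t) ≤ nint x + |t| :=
  calc nint (x + t) ≤ |x + t - round x| := round_le _ _
    _ = |(x - round x) + t| := by ring_nf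
    _ ≤ nint x + |t| := abs_add_le _ _

lemma abs_round_sub_round_le {u v : ℝ} {k : ℤ} (h : |u - v| ≤ k - 1) :
    |round u - round v| ≤ k := by
  have hu := abs_le.mp (abs_sub_round u)
  have hv := abs_le.mp (abs_sub_round v)
  have huv := abs_le.mp h
  have : |((round u - round v : ℤ) : ℝ)| ≤ k := by
    push_cast
    exact abs_le.mpr ⟨by linarith, by linarith⟩
  exact_mod_cast this

lemma approxSet_mono {n : ℕ} {y σ τ : ℝ} (h : σ ≤ τ) : approxSet n y σ ⊆ approxSet n y τ :=
  fun _ hx => lt_of_lt_of_le hx h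

lemma abs_two_pow_mul_gridCeil_sub_le {n M : ℕ} {δ : ℝ} (h : (2 : ℝ) ^ n ≤ 3 ^ M * δ) (x : ℝ) :
    |2 ^ n * gridCeil M x - 2 ^ n * x| ≤ δ := by
  have hpos : (0 : ℝ) < 3 ^ M := by positivity
  rw [← mul_sub, abs_mul, abs_of_pos (by positivity),
    abs_of_nonneg (sub_nonneg.mpr (le_gridCeil M x))]
  calc (2 : ℝ) ^ n * (gridCeil M x - x) ≤ 2 ^ n * (3 ^ M)⁻¹ := by
        gcongr; linarith [gridCeil_le M x]
    _ ≤ δ := by rw [← div_eq_mul_inv, div_le_iff₀ hpos]; linarith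

lemma gridCeil_mem_approxSet {n M : ℕ} {y σ δ : ℝ} (h : (2 : ℝ) ^ n ≤ 3 ^ M * δ) {x : ℝ}
    (hx : x ∈ approxSet n y σ) :
    gridCeil M x ∈ approxSet n y (σ + δ) :=
  calc nint (2 ^ n * gridCeil M x - y)
      = nint ((2 ^ n * x - y) + (2 ^ n * gridCeil M x - 2 ^ n * x)) := by ring_nf
    _ ≤ nint (2 ^ n * x - y) + |2 ^ n * gridCeil M x - 2 ^ n * x| := nint_add_le _ _
    _ < σ + δ := add_lt_add_of_lt_of_le hx (abs_two_pow_mul_gridCeil_sub_le h x)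

noncomputable def endpointCode (n M N : ℕ) (y x : ℝ) : ℝ × ℤ × ℤ :=
  (gridCeil M x, round (2 ^ n * x - y) - round (2 ^ n * gridCeil M x - y),
    round (3 ^ N * x) - round (3 ^ N * ((y + round (2 ^ n * x - y)) / 2 ^ n)))

lemma endpointCode_injOn (n M N : ℕ) (y : ℝ) : Set.InjOn (endpointCode n M N y) (endpoints N) := by
  intro x₁ hx₁ x₂ hx₂ heq
  simp only [endpointCode, Prod.mk.injEq] at heq
  obtain ⟨hceil, hshift, hint⟩ := heq
  obtain ⟨j₁, hj₁⟩ := exists_intCast_eq_of_mem_endpoints hx₁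
  obtain ⟨j₂, hj₂⟩ := exists_intCast_eq_of_mem_endpoints hx₂
  have hm : round (2 ^ n * x₁ - y) = round (2 ^ n * x₂ - y) := by rw [hceil] at hshift; omega
  rw [hm, hj₁, hj₂, round_intCast, round_intCast] at hint
  have hj : j₁ = j₂ := by omega
  have h3 : (3 : ℝ) ^ N * x₁ = 3 ^ N * x₂ := by rw [hj₁, hj₂, hj]
  exact mul_left_cancel₀ (by positivity) h3

section Coding

variable {n M N : ℕ} {y σ δ : ℝ}

lemma endpointCode_mapsTo (K : ℕ) (hMN : M ≤ N) (h2M : (2 : ℝ) ^ n ≤ 3 ^ M * δ) (hδ : δ ≤ 1)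
    (hσδ : σ < δ) (hK : (3 : ℝ) ^ N * σ ≤ K * 2 ^ n) :
    Set.MapsTo (endpointCode n M N y) (endpoints N ∩ approxSet n y σ)
      ((endpoints M ∩ approxSet n y (2 * δ)) ×ˢ
        (Set.Icc (-2 : ℤ) 2 ×ˢ Set.Icc (-(K + 1 : ℤ)) (K + 1))) := by
  rintro x ⟨hxN, hxA⟩
  refine ⟨⟨gridCeil_mem_endpoints hMN hxN, ?_⟩, abs_le.mp ?_, abs_le.mp ?_⟩
  · exact approxSet_mono (by linarith) (gridCeil_mem_approxSet h2M hxA)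
  · refine abs_round_sub_round_le ?_
    rw [show 2 ^ n * x - y - (2 ^ n * gridCeil M x - y) = -(2 ^ n * gridCeil M x - 2 ^ n * x) by
      ring, abs_neg]
    push_cast
    linarith [abs_two_pow_mul_gridCeil_sub_le h2M x]
  · refine abs_round_sub_round_le ?_
    have h2 : (0 : ℝ) < 2 ^ n := by positivity
    have hrescale : (3 : ℝ) ^ N * x - 3 ^ N * ((y + round (2 ^ n * x - y)) / 2 ^ n) =
        3 ^ N / 2 ^ n * (2 ^ n * x - y - round (2 ^ n * x - y)) := by
      field_simp; ring
    calc _ = 3 ^ N / 2 ^ n * nint (2 ^ n * x - y) := by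
          rw [hrescale, abs_mul, abs_of_pos (by positivity)]; rfl
      _ ≤ 3 ^ N / 2 ^ n * σ := by gcongr; exact hxA.le
      _ ≤ K := by rw [div_mul_eq_mul_div, div_le_iff₀ h2]; exact hK
      _ = ((K + 1 : ℤ) : ℝ) - 1 := by push_cast; ring

lemma ncard_inter_approxSet_le (K : ℕ) (hMN : M ≤ N) (h2M : (2 : ℝ) ^ n ≤ 3 ^ M * δ)
    (hδ : δ ≤ 1) (hσδ : σ < δ) (hK : (3 : ℝ) ^ N * σ ≤ K * 2 ^ n) :
    (endpoints N ∩ approxSet n y σ).ncard ≤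
      5 * (2 * K + 3) * (endpoints M ∩ approxSet n y (2 * δ)).ncard := by
  have hfin := ((finite_endpoints M).inter_of_left (approxSet n y (2 * δ))).prod
    ((Set.finite_Icc (-2 : ℤ) 2).prod (Set.finite_Icc (-(K + 1 : ℤ)) (K + 1)))
  refine (Set.ncard_le_ncard_of_injOn _ (endpointCode_mapsTo K hMN h2M hδ hσδ hK)
    ((endpointCode_injOn n M N y).mono Set.inter_subset_left) hfin).trans_eq ?_
  have hIcc (a b : ℤ) : (Set.Icc a b).ncard = (b + 1 - a).toNat := by
    rw [← Finset.coe_Icc, Set.ncard_coe_finset, Int.card_Icc]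
  rw [Set.ncard_prod, Set.ncard_prod, hIcc, hIcc, mul_comm]
  congr 1
  rw [show (2 + 1 - -2 : ℤ).toNat = 5 from rfl,
    show (K + 1 + 1 - -(K + 1 : ℤ)).toNat = 2 * K + 3 by omega]

end Coding

theorem stmt0 :
    ∃ c : ℝ, 0 < c ∧ ∀ (n M N : ℕ) (σ δ y : ℝ),
      0 < σ → σ < δ → δ ≤ 1 →
      σ / 2 ^ (n + 5) ≤ 3 ^ (-(N : ℤ)) →
      (3 : ℝ) ^ (-(N : ℤ)) ≤ σ / 2 ^ n →
      σ / 2 ^ n ≤ 3 ^ (-(M : ℤ)) →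
      (3 : ℝ) ^ (-(M : ℤ)) ≤ δ / 2 ^ n →
      ((endpoints N ∩ approxSet n y σ).ncard : ℝ) ≤
        c * (endpoints M ∩ approxSet n y (2 * δ)).ncard := by
  refine ⟨5 * (2 * 32 + 3), by norm_num, ?_⟩
  intro n M N σ δ y _ hσδ hδ hσN hNσ hσM hMδ
  have hMN : M ≤ N := by
    have := (zpow_le_zpow_iff_right₀ (by norm_num : (1 : ℝ) < 3)).mp (hNσ.trans hσM)
    omega
  rw [zpow_neg, zpow_natCast] at hσN hMδ
  have h2M : (2 : ℝ) ^ n ≤ 3 ^ M * δ := by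
    rwa [le_div_iff₀ (by positivity), inv_mul_le_iff₀ (by positivity)] at hMδ
  have hK : (3 : ℝ) ^ N * σ ≤ (32 : ℕ) * 2 ^ n := by
    rw [div_le_iff₀ (by positivity), le_inv_mul_iff₀ (by positivity), pow_add] at hσN
    push_cast; linarith
  exact_mod_cast ncard_inter_approxSet_le 32 hMN h2M hδ hσδ hK
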